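/- arXiv:math/9702226 — 2 statements merged into one kernel-verified Lean document; each statement's English description precedes it below -/
import Mathlib

section
/- Let G be a group whose commutator subgroup G' is cyclic of order pᵏ for a prime p. Then for every subgroup H of G', the subgroup Hᵖ = ⟨hᵖ : h ∈ H⟩ is contained in the Frattini subgroup Φ(G) of G. -/
open scoped Pointwise

theorem pth_powers_le_frattini {G : Type*} [Group G] (p k : ℕ) (hp : p.Prime)
    (hcyc : IsCyclic (commutator G)) (hcard : Nat.card (commutator G) = p ^ k)
    (H : Subgroup G) (hle : H ≤ commutator G) :
    Subgroup.closure {x : G | ∃ h ∈ H, x = h ^ p} ≤ frattini G := by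
  classical
  set C := commutator G with hCdef
  haveI hCfin : Finite C := Nat.finite_of_card_ne_zero (by
    rw [hcard]; exact pow_ne_zero _ hp.pos.ne')
  obtain ⟨c, hc⟩ := hcyc.exists_generator
  -- `N` is the subgroup generated by p-th powers of elements of `C`.
  set N : Subgroup G := Subgroup.closure {x : G | ∃ g ∈ C, x = g ^ p} with hNdef
  have hNC : N ≤ C := by
    rw [hNdef, Subgroup.closure_le]
    rintro x ⟨g, hg, rfl⟩
    exact C.pow_mem hg p
  have hNnormal : N.Normal := by
    constructor
    intro n hn y
    induction hn using Subgroup.closure_induction with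
    | mem x hx =>
        obtain ⟨g, hg, rfl⟩ := hx
        refine Subgroup.subset_closure ⟨y * g * y⁻¹, ?_, ?_⟩
        · exact Subgroup.Normal.conj_mem inferInstance g hg y
        · rw [conj_pow]
    | one => simpa using N.one_mem
    | mul x z hx hz ihx ihz =>
        have : y * (x * z) * y⁻¹ = (y * x * y⁻¹) * (y * z * y⁻¹) := by group
        rw [this]; exact N.mul_mem ihx ihz
    | inv x hx ihx =>
        have : y * x⁻¹ * y⁻¹ = (y * x * y⁻¹)⁻¹ := by group
        rw [this]; exact N.inv_mem ihx
  have horder : orderOf c = p ^ k := by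
    rw [orderOf_eq_card_of_forall_mem_zpowers hc, hcard]
  -- Key claim: an element of `C` not in `N` generates `C`.
  have keyA : ∀ g : C, (g : G) ∉ N → ∀ x : C, x ∈ Subgroup.zpowers g := by
    intro g hgN
    obtain ⟨j, hj⟩ := mem_powers_iff_mem_zpowers.mpr (hc g)
    by_cases hpj : p ∣ j
    · obtain ⟨l, rfl⟩ := hpj
      exfalso
      apply hgN
      refine Subgroup.subset_closure ⟨((c : G)) ^ l, ?_, ?_⟩
      · exact C.pow_mem c.2 l
      · have : (g : G) = (c : G) ^ (p * l) := by
          rw [← hj]; push_cast; rfl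
        rw [this, mul_comm p l, pow_mul]
    · -- `g = c ^ j` with `p ∤ j`, hence `g` generates `C`.
      have hco : Nat.Coprime (p ^ k) j :=
        Nat.Coprime.pow_left _ (hp.coprime_iff_not_dvd.mpr hpj)
      have hordg : orderOf g = p ^ k := by
        rw [← hj, orderOf_pow, horder, Nat.Coprime.gcd_eq_one hco, Nat.div_one]
      have htop : Subgroup.zpowers g = ⊤ := by
        apply Subgroup.eq_top_of_card_eq
        rw [Nat.card_zpowers, hordg, hcard]
      intro x
      rw [htop]
      trivial
  have hNsubset : ∀ x ∈ {x : G | ∃ h ∈ H, x = h ^ p}, x ∈ N := by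
    rintro x ⟨h, hh, rfl⟩
    exact Subgroup.subset_closure ⟨h, hle hh, rfl⟩
  -- reduce to showing the generators lie in every maximal subgroup
  rw [Subgroup.closure_le]
  intro x hx
  have : ∀ M : Subgroup G, IsCoatom M → x ∈ M := by
    intro M hM
    by_cases hCM : C ≤ M
    · obtain ⟨h, hh, rfl⟩ := hx
      exact M.pow_mem (hCM (hle hh)) p
    -- Now `C ⊄ M`; we show `N ≤ M`.
    have hk : k ≠ 0 := by
      rintro rfl
      apply hCM
      have : C = ⊥ := Subgroup.eq_bot_of_card_eq _ (by rw [hcard, pow_zero])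
      rw [this]; exact bot_le
    have hcN : (c : G) ∉ N := by
      intro hcmem
      -- `N` is contained in the cyclic subgroup generated by `c ^ p`
      have hNz : N ≤ Subgroup.zpowers ((c : G) ^ p) := by
        rw [hNdef, Subgroup.closure_le]
        rintro y ⟨g, hg, rfl⟩
        obtain ⟨j, hj⟩ := mem_powers_iff_mem_zpowers.mpr (hc ⟨g, hg⟩)
        have : g = (c : G) ^ j := by
          have := congrArg (Subgroup.subtype C) hj
          simpa using this.symm
        rw [this, ← pow_mul, mul_comm j p, pow_mul]
        exact Subgroup.pow_mem _ (Subgroup.mem_zpowers _) j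
      obtain ⟨t, ht⟩ := hNz hcmem
      have ht' : ((c : G) ^ p) ^ t = (c : G) := ht
      have h1 : ((c : G) ^ p) ^ t * (c : G)⁻¹ = 1 := by rw [ht']; group
      have h2 : (c : G) ^ (p * t - 1) = 1 := by
        rw [zpow_sub, zpow_one, zpow_mul, zpow_natCast]
        exact h1
      have hdvd : ((orderOf (c : G) : ℤ)) ∣ p * t - 1 :=
        orderOf_dvd_iff_zpow_eq_one.mpr h2
      have hoc : orderOf (c : G) = p ^ k :=
        (orderOf_injective C.subtype C.subtype_injective c).trans horder
      rw [hoc] at hdvd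
      have hpdvd : (p : ℤ) ∣ p * t - 1 :=
        dvd_trans (dvd_pow_self (p : ℤ) hk) (by exact_mod_cast hdvd)
      have hp1 : (p : ℤ) ∣ 1 := by
        have := dvd_sub (Dvd.intro t rfl) hpdvd
        simpa using this
      have hp1' : p ∣ 1 := by exact_mod_cast hp1
      exact hp.one_lt.ne' (Nat.dvd_one.mp hp1')
    by_cases hNM : N ≤ M
    · exact hNM (hNsubset x hx)
    · exfalso
      have hsup : M ⊔ N = ⊤ := hM.2 _ (left_lt_sup.mpr hNM)
      have hcmem : (c : G) ∈ (M : Set G) * (N : Set G) := by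
        rw [← Subgroup.mul_normal M N, hsup]
        trivial
      obtain ⟨m, hm, n, hn, hmn⟩ := hcmem
      have hnC : n ∈ C := hNC hn
      have hmC : m ∈ C := by
        have : m = (c : G) * n⁻¹ := by rw [← hmn]; group
        rw [this]
        exact C.mul_mem c.2 (C.inv_mem hnC)
      by_cases hmN : m ∈ N
      · exact hcN (by rw [← hmn]; exact N.mul_mem hmN hn)
      · -- then `m` generates `C`, so `C ≤ M`, contradiction
        apply hCM
        intro y hy
        obtain ⟨t, ht⟩ := keyA ⟨m, hmC⟩ hmN ⟨y, hy⟩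
        have : y = m ^ t := by
          have := congrArg (Subgroup.subtype C) ht
          simpa using this.symm
        rw [this]
        exact Subgroup.zpow_mem M hm t
  -- conclude: `x` is in the Frattini subgroup
  rw [frattini, Order.radical]
  exact Subgroup.mem_iInf.mpr fun M => Subgroup.mem_iInf.mpr fun hM => this M hM
end

section
/- Let G be a finite group with commutator subgroup G' cyclic of order 2ᵏ (k ≥ 1). Then G' ≤ Φ(G), the Frattini subgroup of G. -/
open Subgroup Pointwise

theorem commutator_le_frattini_of_cyclic_two_power {G : Type*} [Group G] [Finite G]
    (k : ℕ) (hk : 1 ≤ k) (hcyc : IsCyclic (commutator G))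
    (hcard : Nat.card (commutator G) = 2 ^ k) :
    commutator G ≤ frattini G := by
  set C := commutator G with hCdef
  letI : CommGroup C := IsCyclic.commGroup
  have Cnormal : C.Normal := inferInstance
  have hcomm : ∀ x y : G, x ∈ C → y ∈ C → x * y = y * x := by
    intro x y hx hy
    have := mul_comm (⟨x, hx⟩ : C) ⟨y, hy⟩
    exact congrArg Subtype.val this
  -- the subgroup of squares of C
  let S : Subgroup G :=
    { carrier := {x | ∃ y ∈ C, y ^ 2 = x}
      one_mem' := ⟨1, C.one_mem, one_pow 2⟩
      mul_mem' := by
        rintro a b ⟨y, hy, rfl⟩ ⟨z, hz, rfl⟩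
        exact ⟨y * z, C.mul_mem hy hz, ((Commute.mul_pow (hcomm y z hy hz) 2)).symm ▸ rfl⟩
      inv_mem' := by
        rintro a ⟨y, hy, rfl⟩
        exact ⟨y⁻¹, C.inv_mem hy, by group⟩ }
  have hSmem : ∀ x, x ∈ S ↔ ∃ y ∈ C, y ^ 2 = x := fun x => Iff.rfl
  have hSnormal : S.Normal := by
    constructor
    rintro x ⟨y, hy, rfl⟩ g
    exact ⟨g * y * g⁻¹, Cnormal.conj_mem y hy g, by simp [sq, mul_assoc]⟩
  have hSC : S ≤ C := by rintro x ⟨y, hy, rfl⟩; exact C.pow_mem hy 2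
  -- key fact about quotients of the cyclic 2-group C
  have key : ∀ D : Subgroup C, (∀ x : C, ∃ d ∈ D, ∃ y : C, d * y ^ 2 = x) → D = ⊤ := by
    intro D hD
    by_contra hne
    have hidx : D.index ∣ 2 ^ k := hcard ▸ D.index_dvd_card
    have hidx1 : D.index ≠ 1 := fun h => hne (index_eq_one.mp h)
    obtain ⟨j, hjk, hj⟩ := (Nat.dvd_prime_pow Nat.prime_two).mp hidx
    have hj0 : j ≠ 0 := by rintro rfl; exact hidx1 (by simpa using hj)
    have h2 : 2 ∣ Nat.card (C ⧸ D) := by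
      show 2 ∣ D.index
      rw [hj]
      exact dvd_pow_self 2 hj0
    haveI : Fact (Nat.Prime 2) := ⟨Nat.prime_two⟩
    obtain ⟨q, hq⟩ := exists_prime_orderOf_dvd_card' (G := C ⧸ D) 2 h2
    -- squaring is surjective on C ⧸ D
    have hsurj : Function.Surjective (fun x : C ⧸ D => x * x) := by
      intro z
      induction z using QuotientGroup.induction_on with
      | H x =>
        obtain ⟨d, hd, y, hy⟩ := hD x
        refine ⟨QuotientGroup.mk y, ?_⟩
        have : (QuotientGroup.mk (d * y ^ 2) : C ⧸ D) = QuotientGroup.mk x := by rw [hy]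
        rw [← this]
        have hd1 : (QuotientGroup.mk d : C ⧸ D) = 1 := (QuotientGroup.eq_one_iff d).mpr hd
        simp only [QuotientGroup.mk_mul, hd1, one_mul, QuotientGroup.mk_pow]
        ring_nf
        rw [sq]
    have hinj : Function.Injective (fun x : C ⧸ D => x * x) :=
      Finite.injective_iff_surjective.mpr hsurj
    have : q = 1 := by
      apply hinj
      show q * q = 1 * 1
      rw [← sq, ← hq, pow_orderOf_eq_one, one_mul]
    rw [this, orderOf_one] at hq
    norm_num at hq
  -- reduce to maximal subgroups
  refine le_iInf₂ fun M hM => ?_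
  by_cases hSM : S ≤ M
  · by_cases hCM : C ≤ M
    · exact hCM
    -- M ⊔ C = ⊤
    have htop : M ⊔ C = ⊤ := hM.2 _ (lt_of_le_of_ne le_sup_left
      (fun h => hCM (h ▸ le_sup_right)))
    -- the subgroup of C lying in M has index dividing 2
    set D : Subgroup C := M.subgroupOf C with hDdef
    have hsq : ∀ x : C, x ^ 2 ∈ D := by
      intro x
      exact hSM ⟨(x : G), x.2, rfl⟩
    have hDidx : D.index ∣ 2 := by
      haveI : IsCyclic (C ⧸ D) := isCyclic_of_surjective _ (QuotientGroup.mk'_surjective D)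
      obtain ⟨g, hg⟩ := IsCyclic.exists_generator (α := C ⧸ D)
      have hg2 : ∀ z : C ⧸ D, z ^ 2 = 1 := by
        intro z
        induction z using QuotientGroup.induction_on with
        | H x =>
          rw [← QuotientGroup.mk_pow]
          exact (QuotientGroup.eq_one_iff _).mpr (hsq x)
      have hcardQ : Nat.card (C ⧸ D) = orderOf g := by
        rw [← Nat.card_zpowers, (Subgroup.eq_top_iff' _).mpr hg, Subgroup.card_top]
      show D.index ∣ 2
      rw [show D.index = Nat.card (C ⧸ D) from rfl, hcardQ]
      exact orderOf_dvd_of_pow_eq_one (hg2 g)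
    -- surjection from C ⧸ D onto G ⧸ M
    have hMidx : M.index = 2 := by
      have hsurj2 : Function.Surjective (fun x : C ⧸ D =>
          Quotient.liftOn' x (fun c : C => (QuotientGroup.mk c.1 : G ⧸ M))
            (by
              intro a b hab
              rw [QuotientGroup.leftRel_apply] at hab
              exact QuotientGroup.eq.mpr hab)) := by
        intro z
        induction z using QuotientGroup.induction_on with
        | H x =>
          have hx : x ∈ ((C : Set G) * (M : Set G)) := by
            rw [← Subgroup.normal_mul C M, sup_comm, htop]
            simp
          obtain ⟨c, hc, m, hm, rfl⟩ := hx
          refine ⟨QuotientGroup.mk (⟨c, hc⟩ : C), ?_⟩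
          show (QuotientGroup.mk c : G ⧸ M) = QuotientGroup.mk (c * m)
          exact QuotientGroup.eq.mpr (by simpa using hm)
      have hle : M.index ≤ Nat.card (C ⧸ D) :=
        Nat.card_le_card_of_surjective _ hsurj2
      have h2' : Nat.card (C ⧸ D) ∣ 2 := hDidx
      have hDle : Nat.card (C ⧸ D) ≤ 2 := Nat.le_of_dvd two_pos h2'
      have h1 : M.index ≠ 1 := fun h => hM.1 (index_eq_one.mp h)
      have h0 : M.index ≠ 0 := Subgroup.index_ne_zero_of_finite
      omega
    -- index 2 implies all commutators lie in M
    show C ≤ M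
    rw [hCdef, _root_.commutator_def, Subgroup.commutator_le]
    intro a _ b _
    rw [commutatorElement_def, show a * b * a⁻¹ * b⁻¹ = (a * b) * (a⁻¹ * b⁻¹) by group]
    rw [Subgroup.mul_mem_iff_of_index_two hMidx, Subgroup.mul_mem_iff_of_index_two hMidx,
      Subgroup.mul_mem_iff_of_index_two hMidx, Subgroup.inv_mem_iff, Subgroup.inv_mem_iff]
  · -- M ⊔ S = ⊤, deduce C ≤ M directly
    have htop : M ⊔ S = ⊤ := hM.2 _ (lt_of_le_of_ne le_sup_left
      (fun h => hSM (h ▸ le_sup_right)))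
    have : M.subgroupOf C = ⊤ := by
      apply key
      intro x
      have hx : (x : G) ∈ ((M : Set G) * (S : Set G)) := by
        rw [← Subgroup.mul_normal M S, htop]
        simp
      obtain ⟨m, hm, s, hs, hxeq⟩ := hx
      obtain ⟨y, hy, rfl⟩ := hs
      have hmC : m ∈ C := by
        have : m = (x : G) * (y ^ 2)⁻¹ := by rw [← hxeq]; group
        rw [this]
        exact C.mul_mem x.2 (C.inv_mem (C.pow_mem hy 2))
      refine ⟨⟨m, hmC⟩, hm, ⟨y, hy⟩, ?_⟩
      exact Subtype.ext hxeq
    exact subgroupOf_eq_top.mp this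
end
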